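/- arXiv:2105.09585 — 8 statements merged into one kernel-verified Lean document; each statement's English description precedes it below -/
import Mathlib

section
/- Let n ≥ 1 and let M : Matrix (Fin n) (Fin n) ℝ satisfy the local monotonicity property (LMP). Then all off-diagonal entries of M are nonpositive: M ℓ j ≤ 0 for all ℓ ≠ j. -/
/-- A matrix satisfying the local monotonicity property (LMP) has nonpositive
off-diagonal entries. -/
theorem lmp_offdiag_nonpos
    {n : ℕ} (hn : 1 ≤ n) (M : Matrix (Fin n) (Fin n) ℝ)
    (hLMP : ∀ (v : Fin n → ℝ) (ℓ : Fin n),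
      v ℓ ≤ 0 → (∀ j, v ℓ ≤ v j) → (M.mulVec v) ℓ ≤ 0) :
    ∀ ℓ j : Fin n, ℓ ≠ j → M ℓ j ≤ 0 := by
  intro ℓ j hne
  have h := hLMP (Pi.single j 1) ℓ
    (by simp [Pi.single_apply, hne])
    (by intro k; simp [Pi.single_apply, hne]; positivity)
  simpa [Matrix.mulVec_single] using h
end

section
/- Let n ≥ 1 and let M : Matrix (Fin n) (Fin n) ℝ satisfy the local monotonicity property (LMP). Then M is weakly diagonally dominant: for every index ℓ, M ℓ ℓ ≥ ∑_{j ≠ ℓ} |M ℓ j|. -/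
/-- A matrix satisfying the local monotonicity property (LMP) is weakly
diagonally dominant. -/
theorem lmp_weak_diag_dominance
    {n : ℕ} (hn : 1 ≤ n) (M : Matrix (Fin n) (Fin n) ℝ)
    (hLMP : ∀ (v : Fin n → ℝ) (ℓ : Fin n),
      v ℓ ≤ 0 → (∀ j, v ℓ ≤ v j) → (M.mulVec v) ℓ ≤ 0) :
    ∀ ℓ : Fin n, ∑ j ∈ Finset.univ.erase ℓ, |M ℓ j| ≤ M ℓ ℓ := by
  intro ℓ
  -- Step 1: off-diagonal entries are nonpositive
  have hoff : ∀ j : Fin n, j ≠ ℓ → M ℓ j ≤ 0 := by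
    intro j hj
    by_contra hpos
    push_neg at hpos
    set t : ℝ := (M ℓ ℓ + 1) / (M ℓ j) ⊔ 0 with ht
    have ht0 : 0 ≤ t := le_max_right _ _
    set v : Fin n → ℝ := t • (Pi.single j 1 : Fin n → ℝ) - (Pi.single ℓ 1 : Fin n → ℝ) with hv
    have hvℓ : v ℓ = -1 := by
      simp [hv, Pi.single_eq_of_ne (Ne.symm hj), Pi.single_eq_same]
    have h1 : v ℓ ≤ 0 := by rw [hvℓ]; norm_num
    have h2 : ∀ k, v ℓ ≤ v k := by
      intro k
      rw [hvℓ]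
      by_cases hkℓ : k = ℓ
      · simp [hkℓ, hvℓ]
      · by_cases hkj : k = j
        · subst hkj
          simp [hv, Pi.single_eq_same, Pi.single_eq_of_ne hkℓ]
          linarith
        · simp [hv, Pi.single_eq_of_ne hkj, Pi.single_eq_of_ne hkℓ]
    have hmv : (M.mulVec v) ℓ = t * M ℓ j - M ℓ ℓ := by
      simp [hv, Matrix.mulVec_sub, Matrix.mulVec_smul, Matrix.mulVec_single]
    have := hLMP v ℓ h1 h2
    rw [hmv] at this
    have htge : (M ℓ ℓ + 1) / (M ℓ j) ≤ t := le_max_left _ _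
    have : M ℓ ℓ + 1 ≤ t * M ℓ j := by
      rw [div_le_iff₀ hpos] at htge
      linarith
    linarith
  -- Step 2: apply LMP to the constant vector -1
  have hrow : 0 ≤ ∑ j, M ℓ j := by
    have := hLMP (fun _ => (-1 : ℝ)) ℓ (by norm_num) (fun _ => le_refl _)
    simp only [Matrix.mulVec, dotProduct, mul_neg, mul_one,
      Finset.sum_neg_distrib] at this
    linarith
  have hsplit : ∑ j, M ℓ j = M ℓ ℓ + ∑ j ∈ Finset.univ.erase ℓ, M ℓ j := by
    rw [← Finset.add_sum_erase _ _ (Finset.mem_univ ℓ)]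
  have habs : ∑ j ∈ Finset.univ.erase ℓ, |M ℓ j|
      = -∑ j ∈ Finset.univ.erase ℓ, M ℓ j := by
    rw [← Finset.sum_neg_distrib]
    refine Finset.sum_congr rfl ?_
    intro j hj
    exact abs_of_nonpos (hoff j (Finset.ne_of_mem_erase hj))
  rw [habs]
  rw [hsplit] at hrow
  linarith
end

section
/- Let n ≥ 1, let M : Matrix (Fin n) (Fin n) ℝ and let S ⊆ Fin n be a set of indices such that for every ℓ ∈ S the off-diagonal entries of row ℓ are nonpositive (M ℓ j ≤ 0 for j ≠ ℓ) and row ℓ is strictly diagonally dominant (M ℓ ℓ > ∑_{j ≠ ℓ} |M ℓ j|). Let v : Fin n → ℝ satisfy (M.mulVec v) ℓ ≥ 0 for every ℓ ∈ S. Then the weak discrete maximum principle holds: for every ℓ ∈ S with v ℓ < 0 there exists an index j ∉ S with v j ≤ v ℓ. Equivalently, min_{ℓ∈S} v ℓ ≥ min{ min_{j∉S} v j, 0 }. -/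
/-- Weak discrete maximum principle: if on a set of indices `S` the matrix `M`
has nonpositive off-diagonal entries and strictly diagonally dominant rows, and
the residual `M.mulVec v` is nonnegative on `S`, then any index in `S` where
`v` is negative is dominated by an index outside `S`. -/
theorem weak_discrete_maximum_principle
    {n : ℕ} (hn : 1 ≤ n) (M : Matrix (Fin n) (Fin n) ℝ) (S : Set (Fin n))
    (hoff : ∀ ℓ ∈ S, ∀ j, j ≠ ℓ → M ℓ j ≤ 0)
    (hdom : ∀ ℓ ∈ S, ∑ j ∈ Finset.univ.erase ℓ, |M ℓ j| < M ℓ ℓ)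
    (v : Fin n → ℝ) (hres : ∀ ℓ ∈ S, 0 ≤ (M.mulVec v) ℓ) :
    ∀ ℓ ∈ S, v ℓ < 0 → ∃ j, j ∉ S ∧ v j ≤ v ℓ := by
  intro ℓ hℓ hvℓ
  haveI : NeZero n := ⟨by omega⟩
  obtain ⟨m, -, hm⟩ := Finset.exists_min_image (Finset.univ : Finset (Fin n)) v
    ⟨ℓ, Finset.mem_univ ℓ⟩
  have hmin : ∀ j, v m ≤ v j := fun j => hm j (Finset.mem_univ j)
  have hvm : v m < 0 := lt_of_le_of_lt (hmin ℓ) hvℓ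
  by_cases hmS : m ∈ S
  · exfalso
    have hres' := hres m hmS
    have hexp : (M.mulVec v) m = M m m * v m + ∑ j ∈ Finset.univ.erase m, M m j * v j := by
      rw [Matrix.mulVec, dotProduct,
        ← Finset.add_sum_erase _ _ (Finset.mem_univ m)]
    have hbound : ∑ j ∈ Finset.univ.erase m, M m j * v j
        ≤ ∑ j ∈ Finset.univ.erase m, M m j * v m := by
      apply Finset.sum_le_sum
      intro j hj
      have hj' : j ≠ m := (Finset.mem_erase.mp hj).1
      exact mul_le_mul_of_nonpos_left (hmin j) (hoff m hmS j hj')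
    have hsum : -∑ j ∈ Finset.univ.erase m, M m j
        ≤ ∑ j ∈ Finset.univ.erase m, |M m j| := by
      rw [← Finset.sum_neg_distrib]
      exact Finset.sum_le_sum fun j _ => neg_le_abs _
    have hpos : 0 < M m m + ∑ j ∈ Finset.univ.erase m, M m j := by
      have := hdom m hmS
      linarith
    have : (M.mulVec v) m ≤ (M m m + ∑ j ∈ Finset.univ.erase m, M m j) * v m := by
      rw [hexp, add_mul, Finset.sum_mul]
      linarith
    nlinarith
  · exact ⟨m, hmS, hmin ℓ⟩
end

section
/- Let n ≥ 1 and let M : Matrix (Fin n) (Fin n) ℝ be a strictly diagonally dominant Z-matrix, i.e. M i j ≤ 0 for all i ≠ j and M i i > ∑_{j ≠ i} |M i j| for every i. Then M is invertible and its inverse is entrywise nonnegative: (M⁻¹) i j ≥ 0 for all i, j. -/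
/-- Monotonicity: if `M` is a strictly diagonally dominant Z-matrix and
`M.mulVec x ≥ 0` entrywise, then `x ≥ 0` entrywise. -/
lemma sdd_Z_matrix_mono
    {n : ℕ} (hn : 1 ≤ n) (M : Matrix (Fin n) (Fin n) ℝ)
    (hZ : ∀ i j : Fin n, i ≠ j → M i j ≤ 0)
    (hdom : ∀ i : Fin n, ∑ j ∈ Finset.univ.erase i, |M i j| < M i i)
    (x : Fin n → ℝ) (hx : ∀ i, 0 ≤ M.mulVec x i) : ∀ i, 0 ≤ x i := by
  by_contra h
  push_neg at h
  obtain ⟨i₁, hi₁⟩ := h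
  have hne : (Finset.univ : Finset (Fin n)).Nonempty := ⟨i₁, Finset.mem_univ _⟩
  obtain ⟨i, -, hmin⟩ := Finset.exists_min_image Finset.univ x hne
  have hxi : x i < 0 := lt_of_le_of_lt (hmin i₁ (Finset.mem_univ _)) hi₁
  have key : M.mulVec x i ≤ (M i i - ∑ j ∈ Finset.univ.erase i, |M i j|) * x i := by
    have hsplit : M.mulVec x i
        = M i i * x i + ∑ j ∈ Finset.univ.erase i, M i j * x j := by
      rw [Matrix.mulVec, dotProduct,
        ← Finset.add_sum_erase _ _ (Finset.mem_univ i)]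
    rw [hsplit, sub_mul, Finset.sum_mul]
    have hsum : ∑ j ∈ Finset.univ.erase i, M i j * x j
        ≤ -(∑ j ∈ Finset.univ.erase i, |M i j| * x i) := by
      rw [← Finset.sum_neg_distrib]
      apply Finset.sum_le_sum
      intro j hj
      have hji : j ≠ i := Finset.ne_of_mem_erase hj
      have hMij : M i j ≤ 0 := hZ i j (Ne.symm hji)
      have habs : |M i j| = -(M i j) := abs_of_nonpos hMij
      rw [habs]
      have : M i j * x j ≤ M i j * x i :=
        mul_le_mul_of_nonpos_left (hmin j (Finset.mem_univ _)) hMij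
      linarith
    linarith
  have hpos : 0 < M i i - ∑ j ∈ Finset.univ.erase i, |M i j| := by
    linarith [hdom i]
  have : M.mulVec x i < 0 := lt_of_le_of_lt key (mul_neg_of_pos_of_neg hpos hxi)
  exact absurd (hx i) (not_le.mpr this)

/-- A strictly diagonally dominant Z-matrix is a nonsingular M-matrix: it is
invertible and its inverse is entrywise nonnegative. -/
theorem sdd_Z_matrix_inverse_nonneg
    {n : ℕ} (hn : 1 ≤ n) (M : Matrix (Fin n) (Fin n) ℝ)
    (hZ : ∀ i j : Fin n, i ≠ j → M i j ≤ 0)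
    (hdom : ∀ i : Fin n, ∑ j ∈ Finset.univ.erase i, |M i j| < M i i) :
    IsUnit M ∧ ∀ i j : Fin n, 0 ≤ M⁻¹ i j := by
  have hdet : M.det ≠ 0 := by
    intro hdet
    obtain ⟨v, hv, hMv⟩ := (Matrix.exists_mulVec_eq_zero_iff).mpr hdet
    have h1 : ∀ i, 0 ≤ v i := by
      apply sdd_Z_matrix_mono hn M hZ hdom
      intro i; rw [hMv]; simp
    have h2 : ∀ i, 0 ≤ (-v) i := by
      apply sdd_Z_matrix_mono hn M hZ hdom
      intro i
      rw [Matrix.mulVec_neg, hMv]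
      simp
    apply hv
    funext i
    show v i = 0
    have := h2 i
    simp only [Pi.neg_apply] at this
    exact le_antisymm (by linarith) (h1 i)
  refine ⟨(Matrix.isUnit_iff_isUnit_det M).mpr (isUnit_iff_ne_zero.mpr hdet), ?_⟩
  intro i j
  have hcol : ∀ k, 0 ≤ M.mulVec (fun l => M⁻¹ l j) k := by
    intro k
    have : M.mulVec (fun l => M⁻¹ l j) k = (M * M⁻¹) k j := by
      simp [Matrix.mulVec, Matrix.mul_apply, dotProduct]
    rw [this, Matrix.mul_nonsing_inv M (isUnit_iff_ne_zero.mpr hdet)]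
    by_cases hkj : k = j <;> simp [Matrix.one_apply, hkj]
  exact sdd_Z_matrix_mono hn M hZ hdom _ hcol i
end

section
/- Let n ≥ 1 and K ≥ 1. For each k < K let I_k : Matrix (Fin n) (Fin n) ℝ be invertible with entrywise nonnegative inverse, let E_k : Matrix (Fin n) (Fin n) ℝ have all entries nonpositive, and let F_k : Fin n → ℝ have all entries nonnegative. Let v : Fin (K+1) → (Fin n → ℝ) satisfy v K ≥ 0 entrywise and, for every k < K, (I_k).mulVec (v k) + (E_k).mulVec (v (k+1)) = F_k. Then v k ≥ 0 entrywise for every k ≤ K. -/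
/-- Nonnegativity of the solution of the backward IMEX time-stepping scheme:
monotone implicit matrices, nonpositive explicit matrices, nonnegative data and
nonnegative final-time values yield nonnegative solutions at all timesteps. -/
theorem imex_scheme_nonneg
    {n K : ℕ} (hn : 1 ≤ n) (hK : 1 ≤ K)
    (I : Fin K → Matrix (Fin n) (Fin n) ℝ)
    (hI : ∀ k, IsUnit (I k) ∧ ∀ i j, 0 ≤ (I k)⁻¹ i j)
    (E : Fin K → Matrix (Fin n) (Fin n) ℝ)
    (hE : ∀ k, ∀ i j, E k i j ≤ 0)
    (F : Fin K → Fin n → ℝ) (hF : ∀ k, ∀ i, 0 ≤ F k i)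
    (v : Fin (K + 1) → Fin n → ℝ)
    (hvK : ∀ i, 0 ≤ v (Fin.last K) i)
    (hscheme : ∀ k : Fin K,
      (I k).mulVec (v k.castSucc) + (E k).mulVec (v k.succ) = F k) :
    ∀ (k : Fin (K + 1)) (i : Fin n), 0 ≤ v k i := by
  have main : ∀ d : ℕ, ∀ k : Fin (K + 1), K ≤ k.val + d → ∀ i, 0 ≤ v k i := by
    intro d
    induction d with
    | zero =>
      intro k hk i
      have : k = Fin.last K := by
        apply Fin.ext
        simp only [Fin.val_last]
        omega
      rw [this]; exact hvK i
    | succ d ih =>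
      intro k hk i
      rcases eq_or_lt_of_le (Nat.lt_succ_iff.mp k.isLt) with h | h
      · have : k = Fin.last K := Fin.ext h
        rw [this]; exact hvK i
      · set k' : Fin K := ⟨k.val, h⟩ with hk'
        have hcast : k'.castSucc = k := Fin.ext rfl
        have hnext : ∀ i, 0 ≤ v k'.succ i := by
          intro i
          apply ih k'.succ
          simp [Fin.val_succ]
          have hcv : ((k'.castSucc : Fin (K + 1)) : ℕ) = (k' : ℕ) := rfl
          omega
        have hs := hscheme k'
        -- w := F k' - (E k').mulVec (v k'.succ) is nonneg
        have hw : ∀ i, 0 ≤ (F k' - (E k').mulVec (v k'.succ)) i := by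
          intro i
          simp only [Pi.sub_apply]
          have : (E k').mulVec (v k'.succ) i ≤ 0 := by
            simp only [Matrix.mulVec, dotProduct]
            apply Finset.sum_nonpos
            intro j _
            exact mul_nonpos_of_nonpos_of_nonneg (hE k' i j) (hnext j)
          linarith [hF k' i]
        have heq : (I k').mulVec (v k) = F k' - (E k').mulVec (v k'.succ) := by
          rw [← hcast] at *
          rw [eq_sub_iff_add_eq, hs]
        have hinv : (I k')⁻¹ * I k' = 1 :=
          Matrix.nonsing_inv_mul _ ((Matrix.isUnit_iff_isUnit_det _).mp (hI k').1)
        have : v k = (I k')⁻¹.mulVec (F k' - (E k').mulVec (v k'.succ)) := by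
          rw [← heq, Matrix.mulVec_mulVec, hinv, Matrix.one_mulVec]
        rw [this]
        simp only [Matrix.mulVec, dotProduct]
        apply Finset.sum_nonneg
        intro j _
        exact mul_nonneg ((hI k').2 i j) (hw j)
  intro k i
  exact main K k (by omega) i
end

section
/- Let n ≥ 1 and K ≥ 1. For each k < K let I_k : Matrix (Fin n) (Fin n) ℝ be invertible with entrywise nonnegative inverse, let E_k : Matrix (Fin n) (Fin n) ℝ have all entries nonpositive, and let F_k : Fin n → ℝ. Let u, w : Fin (K+1) → (Fin n → ℝ) satisfy u K ≤ w K entrywise and, for every k < K, (I_k).mulVec (u k) + (E_k).mulVec (u (k+1)) ≤ F_k entrywise and (I_k).mulVec (w k) + (E_k).mulVec (w (k+1)) = F_k. Then u k ≤ w k entrywise for every k ≤ K. -/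
lemma mulVec_mono_aux {n : ℕ} (M : Matrix (Fin n) (Fin n) ℝ)
    (hM : ∀ i j, 0 ≤ M i j) {x y : Fin n → ℝ} (h : ∀ i, x i ≤ y i) :
    ∀ i, M.mulVec x i ≤ M.mulVec y i := by
  intro i
  simp only [Matrix.mulVec, dotProduct]
  exact Finset.sum_le_sum fun j _ => mul_le_mul_of_nonneg_left (h j) (hM i j)

/-- Comparison for the backward IMEX scheme: a discrete subsolution `u` lies
below the discrete solution `w` at every timestep. -/
theorem imex_scheme_comparison
    {n K : ℕ} (hn : 1 ≤ n) (hK : 1 ≤ K)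
    (I : Fin K → Matrix (Fin n) (Fin n) ℝ)
    (hI : ∀ k, IsUnit (I k) ∧ ∀ i j, 0 ≤ (I k)⁻¹ i j)
    (E : Fin K → Matrix (Fin n) (Fin n) ℝ)
    (hE : ∀ k, ∀ i j, E k i j ≤ 0)
    (F : Fin K → Fin n → ℝ)
    (u w : Fin (K + 1) → Fin n → ℝ)
    (hfinal : ∀ i, u (Fin.last K) i ≤ w (Fin.last K) i)
    (hu : ∀ k : Fin K, ∀ i,
      ((I k).mulVec (u k.castSucc) + (E k).mulVec (u k.succ)) i ≤ F k i)
    (hw : ∀ k : Fin K,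
      (I k).mulVec (w k.castSucc) + (E k).mulVec (w k.succ) = F k) :
    ∀ (k : Fin (K + 1)) (i : Fin n), u k i ≤ w k i := by
  have main : ∀ m : ℕ, ∀ k : Fin (K + 1), (k : ℕ) + m = K →
      ∀ i, u k i ≤ w k i := by
    intro m
    induction m with
    | zero =>
      intro k hk i
      have : k = Fin.last K := by
        apply Fin.ext
        simpa using hk
      rw [this]; exact hfinal i
    | succ m ih =>
      intro k hk i
      have hlt : (k : ℕ) < K := by omega
      set k' : Fin K := ⟨(k : ℕ), hlt⟩ with hk'
      have hcast : k'.castSucc = k := by apply Fin.ext; rfl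
      have hsucc : ((k'.succ : Fin (K + 1)) : ℕ) + m = K := by
        rw [Fin.val_succ]
        have e1 : (k' : ℕ) = (k : ℕ) := rfl
        have e2 : ((k'.castSucc : Fin (K + 1)) : ℕ) = (k : ℕ) := rfl
        omega
      have ihsucc : ∀ i, u k'.succ i ≤ w k'.succ i := ih k'.succ hsucc
      obtain ⟨hunit, hinvpos⟩ := hI k'
      set A := I k' with hA
      have hdet : IsUnit A.det := (Matrix.isUnit_iff_isUnit_det A).mp hunit
      -- A.mulVec (u k) ≤ F - E.mulVec (u succ)
      have hAu : ∀ j, A.mulVec (u k) j ≤ (F k' - (E k').mulVec (u k'.succ)) j := by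
        intro j
        have := hu k' j
        rw [hcast] at this
        simp only [Pi.add_apply] at this
        simp only [Pi.sub_apply]
        linarith
      -- E.mulVec (w succ) ≤ E.mulVec (u succ), i.e. -E monotone
      have hEmono : ∀ j, (F k' - (E k').mulVec (u k'.succ)) j ≤
          (F k' - (E k').mulVec (w k'.succ)) j := by
        intro j
        have := mulVec_mono_aux (-(E k')) (fun i j => by
          simpa using neg_nonneg.mpr (hE k' i j)) ihsucc j
        simp only [Matrix.neg_mulVec, Pi.neg_apply] at this
        simp only [Pi.sub_apply]
        linarith
      have hxu : u k = A⁻¹.mulVec (A.mulVec (u k)) := by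
        rw [Matrix.mulVec_mulVec, Matrix.nonsing_inv_mul A hdet, Matrix.one_mulVec]
      have hxw : w k = A⁻¹.mulVec (F k' - (E k').mulVec (w k'.succ)) := by
        have h1 : A.mulVec (w k) = F k' - (E k').mulVec (w k'.succ) := by
          have := hw k'
          rw [hcast] at this
          funext j
          have := congrFun this j
          simp only [Pi.add_apply] at this
          simp only [Pi.sub_apply]
          linarith
        rw [← h1, Matrix.mulVec_mulVec, Matrix.nonsing_inv_mul A hdet,
          Matrix.one_mulVec]
      calc u k i = A⁻¹.mulVec (A.mulVec (u k)) i := by rw [← hxu]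
        _ ≤ A⁻¹.mulVec (F k' - (E k').mulVec (u k'.succ)) i :=
            mulVec_mono_aux A⁻¹ hinvpos hAu i
        _ ≤ A⁻¹.mulVec (F k' - (E k').mulVec (w k'.succ)) i :=
            mulVec_mono_aux A⁻¹ hinvpos hEmono i
        _ = w k i := by rw [← hxw]
  intro k i
  exact main (K - (k : ℕ)) k (by omega) i
end

section
/- Let n ≥ 1 and let A be a nonempty compact topological space. Let M : A → Matrix (Fin n) (Fin n) ℝ and b : A → (Fin n → ℝ) be continuous. Assume that for every selection σ : Fin n → A, the matrix N_σ defined by N_σ ℓ j = M (σ ℓ) ℓ j is invertible with entrywise nonnegative inverse. Then there exists a unique x : Fin n → ℝ such that for every index ℓ, sup_{α ∈ A} ( ((M α).mulVec x) ℓ − (b α) ℓ ) = 0. -/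
open scoped Matrix
open Matrix Filter Topology

set_option linter.unusedSectionVars false
set_option linter.unusedVariables false

namespace BellmanAux

variable {n : ℕ} {A : Type*} [TopologicalSpace A] [CompactSpace A] [Nonempty A]

/-- The row-wise selected matrix. -/
def Nmat (M : A → Matrix (Fin n) (Fin n) ℝ) (σ : Fin n → A) : Matrix (Fin n) (Fin n) ℝ :=
  Matrix.of fun ℓ j => M (σ ℓ) ℓ j

/-- The row-wise selected right-hand side. -/
def Bvec (b : A → Fin n → ℝ) (σ : Fin n → A) : Fin n → ℝ := fun ℓ => b (σ ℓ) ℓ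

/-- The Bellman operator. -/
noncomputable def Fop (M : A → Matrix (Fin n) (Fin n) ℝ) (b : A → Fin n → ℝ) (x : Fin n → ℝ) : Fin n → ℝ :=
  fun ℓ => ⨆ α : A, (M α).mulVec x ℓ - b α ℓ

/-- Howard map. -/
noncomputable def Phi (M : A → Matrix (Fin n) (Fin n) ℝ) (b : A → Fin n → ℝ) (σ : Fin n → A) : Fin n → ℝ :=
  (Nmat M σ)⁻¹.mulVec (Bvec b σ)

variable {M : A → Matrix (Fin n) (Fin n) ℝ} {b : A → Fin n → ℝ}

lemma cont_g (hM : Continuous M) (hb : Continuous b) (x : Fin n → ℝ) (ℓ : Fin n) :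
    Continuous fun α : A => (M α).mulVec x ℓ - b α ℓ := by
  have h1 : Continuous fun α : A => (M α).mulVec x ℓ := by
    show Continuous fun α : A => ∑ j, M α ℓ j * x j
    exact continuous_finset_sum _ fun j _ => (hM.matrix_elem ℓ j).mul continuous_const
  exact h1.sub ((continuous_apply ℓ).comp hb)

lemma bdd (hM : Continuous M) (hb : Continuous b) (x : Fin n → ℝ) (ℓ : Fin n) :
    BddAbove (Set.range fun α : A => (M α).mulVec x ℓ - b α ℓ) :=
  (isCompact_range (cont_g hM hb x ℓ)).bddAbove

lemma le_Fop (hM : Continuous M) (hb : Continuous b) (x : Fin n → ℝ) (ℓ : Fin n) (α : A) :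
    (M α).mulVec x ℓ - b α ℓ ≤ Fop M b x ℓ :=
  le_ciSup (bdd hM hb x ℓ) α

lemma exists_attain (hM : Continuous M) (hb : Continuous b) (x : Fin n → ℝ) :
    ∃ σ : Fin n → A, ∀ ℓ, Fop M b x ℓ = (Nmat M σ).mulVec x ℓ - Bvec b σ ℓ := by
  have h : ∀ ℓ : Fin n, ∃ α : A, Fop M b x ℓ = (M α).mulVec x ℓ - b α ℓ := by
    intro ℓ
    obtain ⟨α₀, hα₀⟩ := isCompact_univ.exists_isMaxOn (Set.univ_nonempty)
      (cont_g hM hb x ℓ).continuousOn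
    refine ⟨α₀, le_antisymm (ciSup_le fun α => hα₀.2 (Set.mem_univ α)) (le_Fop hM hb x ℓ α₀)⟩
  choose σ hσ using h
  exact ⟨σ, fun ℓ => hσ ℓ⟩

lemma nonneg_of_mulVec_nonneg
    (hmono : ∀ σ : Fin n → A,
      IsUnit (Matrix.of fun ℓ j => M (σ ℓ) ℓ j) ∧
      ∀ i j, 0 ≤ (Matrix.of fun ℓ j => M (σ ℓ) ℓ j)⁻¹ i j)
    (σ : Fin n → A) (u : Fin n → ℝ) (h : ∀ ℓ, 0 ≤ (Nmat M σ).mulVec u ℓ) :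
    ∀ i, 0 ≤ u i := by
  have hunit : IsUnit (Nmat M σ) := (hmono σ).1
  have hdet : IsUnit (Nmat M σ).det := (Matrix.isUnit_iff_isUnit_det _).1 hunit
  have key : (Nmat M σ)⁻¹.mulVec ((Nmat M σ).mulVec u) = u := by
    rw [Matrix.mulVec_mulVec, Matrix.nonsing_inv_mul _ hdet, Matrix.one_mulVec]
  intro i
  have : u i = ∑ j, (Nmat M σ)⁻¹ i j * (Nmat M σ).mulVec u j := by
    conv_lhs => rw [← key]
    rfl
  rw [this]
  exact Finset.sum_nonneg fun j _ => mul_nonneg ((hmono σ).2 i j) (h j)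

lemma Nmat_mulVec_Phi
    (hmono : ∀ σ : Fin n → A,
      IsUnit (Matrix.of fun ℓ j => M (σ ℓ) ℓ j) ∧
      ∀ i j, 0 ≤ (Matrix.of fun ℓ j => M (σ ℓ) ℓ j)⁻¹ i j)
    (σ : Fin n → A) : (Nmat M σ).mulVec (Phi M b σ) = Bvec b σ := by
  have hdet : IsUnit (Nmat M σ).det := (Matrix.isUnit_iff_isUnit_det _).1 (hmono σ).1
  rw [Phi, Matrix.mulVec_mulVec, Matrix.mul_nonsing_inv _ hdet, Matrix.one_mulVec]

lemma cont_Phi (hM : Continuous M) (hb : Continuous b)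
    (hmono : ∀ σ : Fin n → A,
      IsUnit (Matrix.of fun ℓ j => M (σ ℓ) ℓ j) ∧
      ∀ i j, 0 ≤ (Matrix.of fun ℓ j => M (σ ℓ) ℓ j)⁻¹ i j)
    (i : Fin n) : Continuous fun σ : Fin n → A => Phi M b σ i := by
  have hN : Continuous fun σ : Fin n → A => Nmat M σ := by
    apply continuous_matrix
    intro ℓ j
    exact (hM.matrix_elem ℓ j).comp (continuous_apply ℓ)
  have hdetne : ∀ σ : Fin n → A, (Nmat M σ).det ≠ 0 := fun σ =>
    IsUnit.ne_zero ((Matrix.isUnit_iff_isUnit_det _).1 (hmono σ).1)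
  have hinv : ∀ i j : Fin n,
      Continuous fun σ : Fin n → A => (Nmat M σ)⁻¹ i j := by
    intro i j
    have : (fun σ : Fin n → A => (Nmat M σ)⁻¹ i j)
        = fun σ => ((Nmat M σ).det)⁻¹ * (Nmat M σ).adjugate i j := by
      funext σ
      rw [Matrix.inv_def, Ring.inverse_eq_inv']
      rfl
    rw [this]
    exact ((hN.matrix_det).inv₀ hdetne).mul ((hN.matrix_adjugate).matrix_elem i j)
  have hB : ∀ j : Fin n, Continuous fun σ : Fin n → A => Bvec b σ j := fun j =>
    ((continuous_apply j).comp hb).comp (continuous_apply j)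
  show Continuous fun σ : Fin n → A => ∑ j, (Nmat M σ)⁻¹ i j * Bvec b σ j
  exact continuous_finset_sum _ fun j _ => (hinv i j).mul (hB j)

lemma exists_lb (hM : Continuous M) (hb : Continuous b)
    (hmono : ∀ σ : Fin n → A,
      IsUnit (Matrix.of fun ℓ j => M (σ ℓ) ℓ j) ∧
      ∀ i j, 0 ≤ (Matrix.of fun ℓ j => M (σ ℓ) ℓ j)⁻¹ i j)
    (i : Fin n) : ∃ c : ℝ, ∀ σ : Fin n → A, c ≤ Phi M b σ i := by
  obtain ⟨c, hc⟩ := (isCompact_range (cont_Phi hM hb hmono i)).bddBelow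
  exact ⟨c, fun σ => hc (Set.mem_range_self σ)⟩

lemma exists_C (hM : Continuous M) :
    ∃ C : ℝ, 0 ≤ C ∧ ∀ (α : A) (ℓ j : Fin n), |M α ℓ j| ≤ C := by
  have h : ∀ ℓ j : Fin n, ∃ c : ℝ, ∀ α : A, |M α ℓ j| ≤ c := by
    intro ℓ j
    obtain ⟨c, hc⟩ := (isCompact_range ((hM.matrix_elem ℓ j).abs)).bddAbove
    exact ⟨c, fun α => hc (Set.mem_range_self α)⟩
  choose c hc using h
  refine ⟨∑ ℓ, ∑ j, max (c ℓ j) 0, Finset.sum_nonneg fun ℓ _ =>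
    Finset.sum_nonneg fun j _ => le_max_right _ _, fun α ℓ j => ?_⟩
  calc |M α ℓ j| ≤ c ℓ j := hc ℓ j α
    _ ≤ max (c ℓ j) 0 := le_max_left _ _
    _ ≤ ∑ j', max (c ℓ j') 0 :=
        Finset.single_le_sum (f := fun j' => max (c ℓ j') 0)
          (fun j' _ => le_max_right _ _) (Finset.mem_univ j)
    _ ≤ ∑ ℓ', ∑ j', max (c ℓ' j') 0 :=
        Finset.single_le_sum (f := fun ℓ' => ∑ j', max (c ℓ' j') 0)
          (fun ℓ' _ => Finset.sum_nonneg fun j' _ => le_max_right _ _) (Finset.mem_univ ℓ)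

lemma Fop_le (hM : Continuous M) (hb : Continuous b) {C : ℝ}
    (hC : ∀ (α : A) (ℓ j : Fin n), |M α ℓ j| ≤ C) (x y : Fin n → ℝ) (ℓ : Fin n) :
    Fop M b x ℓ ≤ Fop M b y ℓ + ∑ j, C * |x j - y j| := by
  apply ciSup_le
  intro α
  have e1 : (M α).mulVec x ℓ - (M α).mulVec y ℓ = ∑ j, M α ℓ j * (x j - y j) := by
    have h := congrFun (Matrix.mulVec_sub (M α) x y) ℓ
    calc (M α).mulVec x ℓ - (M α).mulVec y ℓ = ((M α).mulVec x - (M α).mulVec y) ℓ := rfl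
      _ = (M α).mulVec (x - y) ℓ := h.symm
      _ = ∑ j, M α ℓ j * (x j - y j) := rfl
  have e2 : ∑ j, M α ℓ j * (x j - y j) ≤ ∑ j, C * |x j - y j| := by
    refine Finset.sum_le_sum fun j _ => ?_
    calc M α ℓ j * (x j - y j) ≤ |M α ℓ j * (x j - y j)| := le_abs_self _
      _ = |M α ℓ j| * |x j - y j| := abs_mul _ _
      _ ≤ C * |x j - y j| := mul_le_mul_of_nonneg_right (hC α ℓ j) (abs_nonneg _)
  have e3 : (M α).mulVec y ℓ - b α ℓ ≤ Fop M b y ℓ := le_Fop hM hb y ℓ α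
  linarith

end BellmanAux

open BellmanAux

/-- Existence and uniqueness of the solution of one implicit timestep of the
discrete Bellman scheme `sup_α (M α x − b α) = 0`, under compactness of the
control set, continuity of the coefficients and inverse nonnegativity of every
row-wise selected matrix. -/
theorem bellman_system_exists_unique
    {n : ℕ} (hn : 1 ≤ n)
    {A : Type*} [TopologicalSpace A] [CompactSpace A] [Nonempty A]
    (M : A → Matrix (Fin n) (Fin n) ℝ) (hM : Continuous M)
    (b : A → Fin n → ℝ) (hb : Continuous b)
    (hmono : ∀ σ : Fin n → A,
      IsUnit (Matrix.of fun ℓ j => M (σ ℓ) ℓ j) ∧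
      ∀ i j, 0 ≤ (Matrix.of fun ℓ j => M (σ ℓ) ℓ j)⁻¹ i j) :
    ∃! x : Fin n → ℝ, ∀ ℓ : Fin n,
      (⨆ α : A, ((M α).mulVec x) ℓ - b α ℓ) = 0 := by
  classical
  obtain ⟨C, hC0, hC⟩ := exists_C hM
  -- selection function attaining the supremum
  choose S hS using fun x : Fin n → ℝ => exists_attain (M := M) (b := b) hM hb x
  -- the Howard iteration
  set x : ℕ → Fin n → ℝ :=
    fun k => Nat.rec (Phi M b (S 0)) (fun _ xk => Phi M b (S xk)) k with hxdef
  have hx0 : x 0 = Phi M b (S 0) := rfl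
  have hxs : ∀ k, x (k + 1) = Phi M b (S (x k)) := fun k => rfl
  have hrange : ∀ k, ∃ σ, x k = Phi M b σ := by
    intro k
    cases k with
    | zero => exact ⟨S 0, rfl⟩
    | succ k => exact ⟨S (x k), rfl⟩
  -- F is nonnegative on the range of Phi
  have hFnn : ∀ k ℓ, 0 ≤ Fop M b (x k) ℓ := by
    intro k ℓ
    obtain ⟨σ, hσ⟩ := hrange k
    have h1 : (M (σ ℓ)).mulVec (x k) ℓ - b (σ ℓ) ℓ = 0 := by
      have := congrFun (Nmat_mulVec_Phi (b := b) hmono σ) ℓ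
      rw [hσ]
      exact sub_eq_zero_of_eq this
    have := le_Fop hM hb (x k) ℓ (σ ℓ)
    rw [h1] at this
    exact this
  -- the iteration is antitone
  have hdec : ∀ k i, x (k + 1) i ≤ x k i := by
    intro k i
    have key : ∀ ℓ, 0 ≤ (Nmat M (S (x k))).mulVec (x k - x (k + 1)) ℓ := by
      intro ℓ
      rw [Matrix.mulVec_sub]
      have h1 : (Nmat M (S (x k))).mulVec (x (k + 1)) ℓ = Bvec b (S (x k)) ℓ := by
        rw [hxs k]
        exact congrFun (Nmat_mulVec_Phi (b := b) hmono (S (x k))) ℓ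
      have h2 : Fop M b (x k) ℓ = (Nmat M (S (x k))).mulVec (x k) ℓ - Bvec b (S (x k)) ℓ :=
        hS (x k) ℓ
      have h3 := hFnn k ℓ
      show 0 ≤ (Nmat M (S (x k))).mulVec (x k) ℓ - (Nmat M (S (x k))).mulVec (x (k + 1)) ℓ
      rw [h1]
      linarith
    have := nonneg_of_mulVec_nonneg hmono (S (x k)) (x k - x (k + 1)) key i
    have h4 : (0 : ℝ) ≤ x k i - x (k + 1) i := this
    linarith
  have hanti : ∀ i, Antitone fun k => x k i := fun i =>
    antitone_nat_of_succ_le fun k => hdec k i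
  -- lower bound and convergence
  have hLB : ∀ i, ∃ c : ℝ, ∀ k, c ≤ x k i := by
    intro i
    obtain ⟨c, hc⟩ := exists_lb (b := b) hM hb hmono i
    refine ⟨c, fun k => ?_⟩
    obtain ⟨σ, hσ⟩ := hrange k
    rw [hσ]; exact hc σ
  set L : Fin n → ℝ := fun i => ⨅ k, x k i with hLdef
  have hL : ∀ i, Tendsto (fun k => x k i) atTop (𝓝 (L i)) := by
    intro i
    obtain ⟨c, hc⟩ := hLB i
    exact tendsto_atTop_ciInf (hanti i) ⟨c, fun y ⟨k, hk⟩ => hk ▸ hc k⟩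
  -- the difference of consecutive iterates tends to zero
  have hdiff0 : ∀ j : Fin n, Tendsto (fun k => x k j - x (k + 1) j) atTop (𝓝 0) := by
    intro j
    have h1 : Tendsto (fun k => x (k + 1) j) atTop (𝓝 (L j)) :=
      (hL j).comp (tendsto_add_atTop_nat 1)
    have := (hL j).sub h1
    simpa using this
  have hsum0 : Tendsto (fun k => ∑ j, C * |x k j - x (k + 1) j|) atTop (𝓝 0) := by
    have : Tendsto (fun k => ∑ j, C * |x k j - x (k + 1) j|) atTop
        (𝓝 (∑ j : Fin n, C * |(0 : ℝ)|)) := by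
      refine tendsto_finset_sum _ fun j _ => ?_
      exact (((hdiff0 j).abs).const_mul C)
    simpa using this
  -- F (x k) tends to zero
  have hFto0 : ∀ ℓ, Tendsto (fun k => Fop M b (x k) ℓ) atTop (𝓝 0) := by
    intro ℓ
    refine squeeze_zero (fun k => hFnn k ℓ) (fun k => ?_) hsum0
    have h2 : Fop M b (x k) ℓ = (Nmat M (S (x k))).mulVec (x k) ℓ - Bvec b (S (x k)) ℓ :=
      hS (x k) ℓ
    have h1 : (Nmat M (S (x k))).mulVec (x (k + 1)) ℓ = Bvec b (S (x k)) ℓ := by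
      rw [hxs k]
      exact congrFun (Nmat_mulVec_Phi (b := b) hmono (S (x k))) ℓ
    have h3 : Fop M b (x k) ℓ = ∑ j, Nmat M (S (x k)) ℓ j * (x k j - x (k + 1) j) := by
      rw [h2, ← h1]
      have := congrFun (Matrix.mulVec_sub (Nmat M (S (x k))) (x k) (x (k + 1))) ℓ
      rw [show (Nmat M (S (x k))).mulVec (x k) ℓ - (Nmat M (S (x k))).mulVec (x (k+1)) ℓ
          = (Nmat M (S (x k))).mulVec (x k - x (k+1)) ℓ from this.symm]
      rfl
    rw [h3]
    refine Finset.sum_le_sum fun j _ => ?_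
    calc Nmat M (S (x k)) ℓ j * (x k j - x (k + 1) j)
        ≤ |Nmat M (S (x k)) ℓ j * (x k j - x (k + 1) j)| := le_abs_self _
      _ = |Nmat M (S (x k)) ℓ j| * |x k j - x (k + 1) j| := abs_mul _ _
      _ ≤ C * |x k j - x (k + 1) j| :=
          mul_le_mul_of_nonneg_right (hC _ ℓ j) (abs_nonneg _)
  -- F (x k) tends to F L
  have hFtoL : ∀ ℓ, Tendsto (fun k => Fop M b (x k) ℓ) atTop (𝓝 (Fop M b L ℓ)) := by
    intro ℓ
    have hbound : ∀ k, ‖Fop M b (x k) ℓ - Fop M b L ℓ‖ ≤ ∑ j, C * |x k j - L j| := by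
      intro k
      rw [Real.norm_eq_abs, abs_sub_le_iff]
      constructor
      · have := Fop_le hM hb hC (x k) L ℓ
        linarith
      · have := Fop_le hM hb hC L (x k) ℓ
        have he : ∑ j, C * |L j - x k j| = ∑ j, C * |x k j - L j| := by
          refine Finset.sum_congr rfl fun j _ => ?_
          rw [abs_sub_comm]
        rw [he] at this
        linarith
    have hto : Tendsto (fun k => ∑ j, C * |x k j - L j|) atTop (𝓝 0) := by
      have : Tendsto (fun k => ∑ j, C * |x k j - L j|) atTop (𝓝 (∑ j : Fin n, C * |(0:ℝ)|)) := by
        refine tendsto_finset_sum _ fun j _ => ?_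
        have : Tendsto (fun k => x k j - L j) atTop (𝓝 0) := by
          simpa using (hL j).sub (tendsto_const_nhds (x := L j))
        exact (this.abs).const_mul C
      simpa using this
    have h0 : Tendsto (fun k => Fop M b (x k) ℓ - Fop M b L ℓ) atTop (𝓝 0) :=
      squeeze_zero_norm hbound hto
    have := h0.add_const (Fop M b L ℓ)
    simpa using this
  have hLsol : ∀ ℓ, Fop M b L ℓ = 0 := fun ℓ => tendsto_nhds_unique (hFtoL ℓ) (hFto0 ℓ)
  -- uniqueness core
  have key : ∀ u v : Fin n → ℝ, (∀ ℓ, Fop M b u ℓ = 0) → (∀ ℓ, Fop M b v ℓ = 0) →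
      ∀ i, v i ≤ u i := by
    intro u v hu hv i
    have h1 : ∀ ℓ, 0 ≤ (Nmat M (S u)).mulVec (u - v) ℓ := by
      intro ℓ
      rw [Matrix.mulVec_sub]
      have hA : (Nmat M (S u)).mulVec u ℓ - Bvec b (S u) ℓ = 0 := by
        rw [← hS u ℓ]; exact hu ℓ
      have hB : (Nmat M (S u)).mulVec v ℓ - Bvec b (S u) ℓ ≤ 0 := by
        have := le_Fop hM hb v ℓ (S u ℓ)
        rw [hv ℓ] at this
        exact this
      show 0 ≤ (Nmat M (S u)).mulVec u ℓ - (Nmat M (S u)).mulVec v ℓ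
      linarith
    have := nonneg_of_mulVec_nonneg hmono (S u) (u - v) h1 i
    have h4 : (0 : ℝ) ≤ u i - v i := this
    linarith
  refine ⟨L, fun ℓ => hLsol ℓ, fun y hy => ?_⟩
  exact funext fun i => le_antisymm (key L y hLsol hy i) (key y L hy hLsol i)
end

section
/- Let n ≥ 1 and let A be a nonempty compact topological space. Let M : A → Matrix (Fin n) (Fin n) ℝ and b : A → (Fin n → ℝ) be continuous, and assume that for every selection σ : Fin n → A, the matrix N_σ defined by N_σ ℓ j = M (σ ℓ) ℓ j is invertible with entrywise nonnegative inverse. Let x be the unique solution of sup_{α ∈ A} ( ((M α).mulVec x) ℓ − (b α) ℓ ) = 0 for all ℓ. Let (w_m)_{m∈ℕ} be any sequence in Fin n → ℝ such that for each m there exists σ_m : Fin n → A with, for every ℓ: σ_m ℓ attains sup_{α ∈ A} ( ((M α).mulVec (w_m)) ℓ − (b α) ℓ ), and ((M (σ_m ℓ)).mulVec (w_{m+1})) ℓ = (b (σ_m ℓ)) ℓ. Then w_m converges to x as m → ∞. -/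
open Filter

private lemma howard_cont_entry {n : ℕ} {A : Type*} [TopologicalSpace A]
    (M : A → Matrix (Fin n) (Fin n) ℝ) (hM : Continuous M) (ℓ j : Fin n) :
    Continuous fun α => M α ℓ j :=
  (continuous_apply j).comp ((continuous_apply ℓ).comp hM)

private lemma howard_cont_row {n : ℕ} {A : Type*} [TopologicalSpace A]
    (M : A → Matrix (Fin n) (Fin n) ℝ) (hM : Continuous M)
    (b : A → Fin n → ℝ) (hb : Continuous b) (v : Fin n → ℝ) (ℓ : Fin n) :
    Continuous fun α => (M α).mulVec v ℓ - b α ℓ := by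
  have h1 : Continuous fun α => (M α).mulVec v ℓ := by
    simp only [Matrix.mulVec, dotProduct]
    exact continuous_finset_sum _ fun j _ =>
      (howard_cont_entry M hM ℓ j).mul continuous_const
  exact h1.sub ((continuous_apply ℓ).comp hb)

/-- Convergence of Howard's algorithm (policy iteration) for the discrete
Bellman system `sup_α (M α x − b α) = 0`. -/
theorem howard_algorithm_converges
    {n : ℕ} (hn : 1 ≤ n)
    {A : Type*} [TopologicalSpace A] [CompactSpace A] [Nonempty A]
    (M : A → Matrix (Fin n) (Fin n) ℝ) (hM : Continuous M)
    (b : A → Fin n → ℝ) (hb : Continuous b)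
    (hmono : ∀ σ : Fin n → A,
      IsUnit (Matrix.of fun ℓ j => M (σ ℓ) ℓ j) ∧
      ∀ i j, 0 ≤ (Matrix.of fun ℓ j => M (σ ℓ) ℓ j)⁻¹ i j)
    (x : Fin n → ℝ)
    (hx : ∀ ℓ : Fin n, (⨆ α : A, ((M α).mulVec x) ℓ - b α ℓ) = 0)
    (w : ℕ → Fin n → ℝ) (σ : ℕ → Fin n → A)
    (hmax : ∀ (m : ℕ) (ℓ : Fin n),
      ((M (σ m ℓ)).mulVec (w m)) ℓ - b (σ m ℓ) ℓ
        = ⨆ α : A, ((M α).mulVec (w m)) ℓ - b α ℓ)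
    (hstep : ∀ (m : ℕ) (ℓ : Fin n),
      ((M (σ m ℓ)).mulVec (w (m + 1))) ℓ = b (σ m ℓ) ℓ) :
    Tendsto w atTop (nhds x) := by
  classical
  -- boundedness of the families over compact A
  have hbdd : ∀ (v : Fin n → ℝ) (ℓ : Fin n),
      BddAbove (Set.range fun α : A => (M α).mulVec v ℓ - b α ℓ) :=
    fun v ℓ => (isCompact_range (howard_cont_row M hM b hb v ℓ)).bddAbove
  have hle_sup : ∀ (v : Fin n → ℝ) (ℓ : Fin n) (α : A),
      (M α).mulVec v ℓ - b α ℓ ≤ ⨆ α : A, (M α).mulVec v ℓ - b α ℓ :=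
    fun v ℓ α => le_ciSup (hbdd v ℓ) α
  -- key monotonicity lemma from inverse nonnegativity
  have key : ∀ (τ : Fin n → A) (u v : Fin n → ℝ),
      (∀ ℓ, (M (τ ℓ)).mulVec u ℓ ≤ (M (τ ℓ)).mulVec v ℓ) → ∀ j, u j ≤ v j := by
    intro τ u v h j
    set N : Matrix (Fin n) (Fin n) ℝ := Matrix.of fun ℓ j => M (τ ℓ) ℓ j with hN
    have hNinv := (hmono τ).1
    have hpos := (hmono τ).2
    have hmul : N⁻¹ * N = 1 :=
      Matrix.nonsing_inv_mul N ((Matrix.isUnit_iff_isUnit_det N).mp hNinv)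
    have hid : (N⁻¹).mulVec (N.mulVec (v - u)) = v - u := by
      rw [Matrix.mulVec_mulVec, hmul, Matrix.one_mulVec]
    have hrow : ∀ z : Fin n → ℝ, ∀ ℓ, N.mulVec z ℓ = (M (τ ℓ)).mulVec z ℓ :=
      fun z ℓ => rfl
    have hnn : ∀ ℓ, 0 ≤ N.mulVec (v - u) ℓ := by
      intro ℓ
      have : N.mulVec (v - u) ℓ = N.mulVec v ℓ - N.mulVec u ℓ := by
        rw [Matrix.mulVec_sub]; rfl
      rw [this, hrow v ℓ, hrow u ℓ]
      exact sub_nonneg.mpr (h ℓ)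
    have : 0 ≤ (v - u) j := by
      rw [← hid]
      simp only [Matrix.mulVec, dotProduct]
      exact Finset.sum_nonneg fun k _ => mul_nonneg (hpos j k) (hnn k)
    simpa [sub_nonneg] using this
  -- M α x ≤ b α rowwise
  have hFx : ∀ (α : A) (ℓ : Fin n), (M α).mulVec x ℓ ≤ b α ℓ := by
    intro α ℓ
    have := hle_sup x ℓ α
    rw [hx ℓ] at this
    linarith
  -- x ≤ w (m+1)
  have hxle : ∀ m j, x j ≤ w (m + 1) j := by
    intro m
    refine key (σ m) x (w (m + 1)) (fun ℓ => ?_)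
    rw [hstep m ℓ]; exact hFx (σ m ℓ) ℓ
  -- sup residual at w(m+1) is nonneg
  have hFw_nonneg : ∀ (m : ℕ) (ℓ : Fin n),
      0 ≤ ⨆ α : A, (M α).mulVec (w (m + 1)) ℓ - b α ℓ := by
    intro m ℓ
    have := hle_sup (w (m + 1)) ℓ (σ m ℓ)
    rw [hstep m ℓ] at this
    linarith
  -- antitone : w (m+2) ≤ w (m+1)
  have hanti : ∀ m j, w (m + 2) j ≤ w (m + 1) j := by
    intro m
    refine key (σ (m + 1)) (w (m + 2)) (w (m + 1)) (fun ℓ => ?_)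
    have h1 := hmax (m + 1) ℓ
    have h2 := hFw_nonneg m ℓ
    have h3 := hstep (m + 1) ℓ
    rw [← h1] at h2
    rw [show m + 1 + 1 = m + 2 from rfl] at h3
    linarith
  -- pointwise limit
  set y : Fin n → ℝ := fun j => ⨅ m : ℕ, w (m + 1) j with hy
  have hantij : ∀ j : Fin n, Antitone fun m => w (m + 1) j := by
    intro j
    exact antitone_nat_of_succ_le fun m => hanti m j
  have hbelow : ∀ j : Fin n, BddBelow (Set.range fun m => w (m + 1) j) := by
    intro j
    exact ⟨x j, fun r ⟨m, hm⟩ => hm ▸ hxle m j⟩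
  have hconv : ∀ j : Fin n, Tendsto (fun m => w (m + 1) j) atTop (nhds (y j)) :=
    fun j => tendsto_atTop_ciInf (hantij j) (hbelow j)
  have hxy : ∀ j, x j ≤ y j := fun j => le_ciInf fun m => hxle m j
  -- M α y ≤ b α for all α
  have hKbdd : ∀ ℓ j : Fin n, BddAbove (Set.range fun α : A => M α ℓ j) :=
    fun ℓ j => (isCompact_range (howard_cont_entry M hM ℓ j)).bddAbove
  set K : Fin n → Fin n → ℝ := fun ℓ j => ⨆ α : A, M α ℓ j with hK
  have hMleK : ∀ (α : A) (ℓ j : Fin n), M α ℓ j ≤ K ℓ j :=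
    fun α ℓ j => le_ciSup (hKbdd ℓ j) α
  have hMy : ∀ (α : A) (ℓ : Fin n), (M α).mulVec y ℓ ≤ b α ℓ := by
    intro α ℓ
    rw [← sub_nonpos]
    -- the sequences
    have hL : Tendsto (fun m => (M α).mulVec (w (m + 1)) ℓ - b α ℓ) atTop
        (nhds ((M α).mulVec y ℓ - b α ℓ)) := by
      apply Tendsto.sub_const
      simp only [Matrix.mulVec, dotProduct]
      exact tendsto_finset_sum _ fun j _ => (tendsto_const_nhds.mul (hconv j))
    have hR : Tendsto (fun m => ∑ j, K ℓ j * (w (m + 1) j - w (m + 2) j)) atTop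
        (nhds 0) := by
      have : Tendsto (fun m => ∑ j, K ℓ j * (w (m + 1) j - w (m + 2) j)) atTop
          (nhds (∑ j, K ℓ j * (y j - y j))) := by
        refine tendsto_finset_sum _ fun j _ => tendsto_const_nhds.mul ?_
        have h2 : Tendsto (fun m => w (m + 2) j) atTop (nhds (y j)) :=
          (hconv j).comp (tendsto_add_atTop_nat 1)
        exact (hconv j).sub h2
      simpa using this
    refine le_of_tendsto_of_tendsto' hL hR (fun m => ?_)
    -- pointwise bound
    have hb1 : (M α).mulVec (w (m + 1)) ℓ - b α ℓ
        ≤ ⨆ α : A, (M α).mulVec (w (m + 1)) ℓ - b α ℓ := hle_sup _ ℓ α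
    have hb2 : (⨆ α : A, (M α).mulVec (w (m + 1)) ℓ - b α ℓ)
        = (M (σ (m + 1) ℓ)).mulVec (w (m + 1)) ℓ - (M (σ (m + 1) ℓ)).mulVec (w (m + 2)) ℓ := by
      rw [← hmax (m + 1) ℓ]
      have h3 := hstep (m + 1) ℓ
      rw [show m + 1 + 1 = m + 2 from rfl] at h3
      rw [h3]
    have hb3 : (M (σ (m + 1) ℓ)).mulVec (w (m + 1)) ℓ - (M (σ (m + 1) ℓ)).mulVec (w (m + 2)) ℓ
        ≤ ∑ j, K ℓ j * (w (m + 1) j - w (m + 2) j) := by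
      simp only [Matrix.mulVec, dotProduct, ← Finset.sum_sub_distrib, ← mul_sub]
      refine Finset.sum_le_sum fun j _ => ?_
      exact mul_le_mul_of_nonneg_right (hMleK _ ℓ j) (sub_nonneg.mpr (hanti m j))
    calc (M α).mulVec (w (m + 1)) ℓ - b α ℓ
        ≤ _ := hb1
      _ = _ := hb2
      _ ≤ _ := hb3
  -- maximizer at x : ρ with M (ρ ℓ) x ℓ = b (ρ ℓ) ℓ
  have hmaximizer : ∀ ℓ : Fin n, ∃ α : A, (M α).mulVec x ℓ - b α ℓ = 0 := by
    intro ℓ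
    obtain ⟨α₀, -, hα₀⟩ := IsCompact.exists_isMaxOn isCompact_univ Set.univ_nonempty
      ((howard_cont_row M hM b hb x ℓ).continuousOn)
    refine ⟨α₀, le_antisymm (by linarith [hFx α₀ ℓ]) ?_⟩
    rw [← hx ℓ]
    exact ciSup_le fun α => hα₀ (Set.mem_univ α)
  choose ρ hρ using hmaximizer
  have hyx : ∀ j, y j ≤ x j := by
    refine key ρ y x (fun ℓ => ?_)
    have : (M (ρ ℓ)).mulVec x ℓ = b (ρ ℓ) ℓ := by linarith [hρ ℓ]
    rw [this]
    exact hMy (ρ ℓ) ℓ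
  have hyeq : y = x := funext fun j => le_antisymm (hyx j) (hxy j)
  -- conclude
  rw [tendsto_pi_nhds]
  intro j
  have : Tendsto (fun m => w (m + 1) j) atTop (nhds (x j)) := hyeq ▸ hconv j
  exact (tendsto_add_atTop_iff_nat 1).mp this
end
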